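/- In ℤ[x], the polynomial identity (x^2+5x+13)·(x^4+247x^3+3380x^2+15379x+28561)^3 − 1728·x^13 = (x^6 − 494x^5 − 20618x^4 − 237276x^3 − 1313806x^2 − 3712930x − 4826809)^2 · (x^2 + 6x + 13) holds. -/
import Mathlib


open Polynomial

set_option maxHeartbeats 4000000 in
theorem stmt_19 :
    (X ^ 2 + C 5 * X + C 13) *
          (X ^ 4 + C 247 * X ^ 3 + C 3380 * X ^ 2 + C 15379 * X + C 28561) ^ 3 -
        C 1728 * X ^ 13 =
      ((X ^ 6 - C 494 * X ^ 5 - C 20618 * X ^ 4 - C 237276 * X ^ 3 -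
            C 1313806 * X ^ 2 - C 3712930 * X - C 4826809) ^ 2 *
          (X ^ 2 + C 6 * X + C 13) : Polynomial ℤ) := by
  simp only [map_ofNat]
  ring
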